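/- arXiv:2603.01924 — 5 statements merged into one kernel-verified Lean document; each statement's English description precedes it below -/
import Mathlib

section
/- The co-rotational profile ũ*(t,r) = (2/r)·arctan(r/(√(d−4)·t)) satisfies, for all t > 0 and r > 0, the equation (∂_t² − ∂_r² − ((d−1)/r)∂_r) ũ*(t,r) + (d−3)·(sin(2r·ũ*(t,r)) − 2r·ũ*(t,r))/(2r³) = 0. -/
/-!
Put `s = √(d - 4)`, so that `d - 1 = s² + 3` and `d - 3 = s² + 1`. Every derivative of
`2/r · arctan (r/(s t))` is a rational function of `s, t, r` plus a multiple of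
`arctan (r/(s t)) / r³`, and `2 r ũ* = 4 arctan (r/(s t))` has a sine that is rational in
`r/(s t)` by the double-angle formulas. The `arctan` terms cancel,
`-4 + 2 (s² + 3) - 2 (s² + 1) = 0`, and what remains is an identity of rational functions.
-/

open Real

theorem sin_two_mul_arctan (x : ℝ) : sin (2 * arctan x) = 2 * x / (1 + x ^ 2) := by
  have hsin : sin (arctan x) = x * cos (arctan x) := by
    rw [← tan_mul_cos (cos_arctan_pos x).ne', tan_arctan]
  rw [sin_two_mul, hsin, mul_assoc, mul_assoc, ← sq, cos_sq_arctan]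
  ring

theorem cos_two_mul_arctan (x : ℝ) : cos (2 * arctan x) = (1 - x ^ 2) / (1 + x ^ 2) := by
  rw [cos_two_mul, cos_sq_arctan]
  field_simp
  ring

theorem sin_four_mul_arctan (x : ℝ) :
    sin (4 * arctan x) = 4 * x * (1 - x ^ 2) / (1 + x ^ 2) ^ 2 := by
  rw [show 4 * arctan x = 2 * (2 * arctan x) by ring, sin_two_mul, sin_two_mul_arctan,
    cos_two_mul_arctan]
  field_simp
  ring

theorem hasDerivAt_arctan_div {c : ℝ} (hc : c ≠ 0) (r : ℝ) :
    HasDerivAt (fun r => arctan (r / c)) (c / (c ^ 2 + r ^ 2)) r := by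
  refine ((hasDerivAt_arctan _).comp r ((hasDerivAt_id' r).div_const c)).congr_deriv ?_
  field_simp

noncomputable def corotationalProfile (s t r : ℝ) : ℝ := 2 / r * arctan (r / (s * t))

section

variable {s t r : ℝ}

theorem two_mul_mul_corotationalProfile (hr : r ≠ 0) :
    2 * r * corotationalProfile s t r = 4 * arctan (r / (s * t)) := by
  unfold corotationalProfile
  field_simp
  ring

theorem hasDerivAt_corotationalProfile_time (hs : s ≠ 0) (ht : t ≠ 0) (hr : r ≠ 0) :
    HasDerivAt (fun t => corotationalProfile s t r) (-2 * s / (s ^ 2 * t ^ 2 + r ^ 2)) t := by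
  have hquot :=
    (hasDerivAt_const t r).fun_div ((hasDerivAt_id' t).const_mul s) (mul_ne_zero hs ht)
  refine (((hasDerivAt_arctan _).comp t hquot).const_mul (2 / r)).congr_deriv ?_
  field_simp
  ring

theorem deriv_deriv_corotationalProfile_time (hs : s ≠ 0) (ht : t ≠ 0) (hr : r ≠ 0) :
    deriv (fun t' => deriv (fun t'' => corotationalProfile s t'' r) t') t
      = 4 * s ^ 3 * t / (s ^ 2 * t ^ 2 + r ^ 2) ^ 2 := by
  have hfirst : (fun t' => deriv (fun t'' => corotationalProfile s t'' r) t')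
      =ᶠ[nhds t] fun t' => -2 * s / (s ^ 2 * t' ^ 2 + r ^ 2) := by
    filter_upwards [eventually_ne_nhds ht] with t' ht'
    exact (hasDerivAt_corotationalProfile_time hs ht' hr).deriv
  rw [hfirst.deriv_eq]
  have hden : HasDerivAt (fun t => s ^ 2 * t ^ 2 + r ^ 2) (s ^ 2 * (2 * t)) t := by
    simpa using ((hasDerivAt_pow 2 t).const_mul (s ^ 2)).add_const (r ^ 2)
  refine (((hasDerivAt_const t (-2 * s)).fun_div hden (by positivity)).congr_deriv ?_).deriv
  field_simp
  ring

theorem hasDerivAt_corotationalProfile_radial (hs : s ≠ 0) (ht : t ≠ 0) (hr : r ≠ 0) :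
    HasDerivAt (fun r => corotationalProfile s t r)
      (-2 * arctan (r / (s * t)) / r ^ 2 + 2 * s * t / (r * (s ^ 2 * t ^ 2 + r ^ 2))) r := by
  refine (((hasDerivAt_const r 2).fun_div (hasDerivAt_id' r) hr).fun_mul
    (hasDerivAt_arctan_div (mul_ne_zero hs ht) r)).congr_deriv ?_
  field_simp
  ring

theorem deriv_deriv_corotationalProfile_radial (hs : s ≠ 0) (ht : t ≠ 0) (hr : r ≠ 0) :
    deriv (fun r' => deriv (fun r'' => corotationalProfile s t r'') r') r
      = 4 * arctan (r / (s * t)) / r ^ 3 - 4 * s * t / (r ^ 2 * (s ^ 2 * t ^ 2 + r ^ 2))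
        - 4 * s * t / (s ^ 2 * t ^ 2 + r ^ 2) ^ 2 := by
  have hfirst : (fun r' => deriv (fun r'' => corotationalProfile s t r'') r')
      =ᶠ[nhds r] fun r' =>
        -2 * arctan (r' / (s * t)) / r' ^ 2 + 2 * s * t / (r' * (s ^ 2 * t ^ 2 + r' ^ 2)) := by
    filter_upwards [eventually_ne_nhds hr] with r' hr'
    exact (hasDerivAt_corotationalProfile_radial hs ht hr').deriv
  rw [hfirst.deriv_eq]
  have hD : s ^ 2 * t ^ 2 + r ^ 2 ≠ 0 := by positivity
  have hatan := ((hasDerivAt_arctan_div (mul_ne_zero hs ht) r).const_mul (-2)).fun_div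
    (hasDerivAt_pow 2 r) (pow_ne_zero 2 hr)
  have hden : HasDerivAt (fun r => r * (s ^ 2 * t ^ 2 + r ^ 2))
      (1 * (s ^ 2 * t ^ 2 + r ^ 2) + r * (2 * r)) r := by
    simpa using (hasDerivAt_id' r).fun_mul ((hasDerivAt_pow 2 r).const_add (s ^ 2 * t ^ 2))
  refine ((hatan.add ((hasDerivAt_const r (2 * s * t)).fun_div hden
    (mul_ne_zero hr hD))).congr_deriv ?_).deriv
  field_simp
  ring

theorem corotationalProfile_solves_wave {d : ℝ} (hs : s ≠ 0) (ht : t ≠ 0) (hr : r ≠ 0)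
    (hsd : s ^ 2 = d - 4) :
    deriv (fun t' => deriv (fun t'' => corotationalProfile s t'' r) t') t
      - deriv (fun r' => deriv (fun r'' => corotationalProfile s t r'') r') r
      - ((d - 1) / r) * deriv (fun r'' => corotationalProfile s t r'') r
      + (d - 3) * (sin (2 * r * corotationalProfile s t r) - 2 * r * corotationalProfile s t r)
        / (2 * r ^ 3) = 0 := by
  obtain rfl : d = s ^ 2 + 4 := by linarith
  rw [deriv_deriv_corotationalProfile_time hs ht hr,
    deriv_deriv_corotationalProfile_radial hs ht hr,
    (hasDerivAt_corotationalProfile_radial hs ht hr).deriv,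
    two_mul_mul_corotationalProfile hr, sin_four_mul_arctan]
  have hD : s ^ 2 * t ^ 2 + r ^ 2 ≠ 0 := by positivity
  field_simp
  ring

end

/-- The co-rotational profile `ũ*(t,r) = (2/r)·arctan(r/(√(d−4)·t))` satisfies,
for all `t > 0` and `r > 0`,
`(∂_t² − ∂_r² − ((d−1)/r)∂_r) ũ* + (d−3)(sin(2r·ũ*) − 2r·ũ*)/(2r³) = 0`. -/
theorem ustar_profile_solves_wave (d : ℕ) (hd : 5 ≤ d)
    (u : ℝ → ℝ → ℝ)
    (hu : ∀ t r : ℝ, u t r = (2 / r) * Real.arctan (r / (Real.sqrt ((d : ℝ) - 4) * t))) :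
    ∀ t r : ℝ, 0 < t → 0 < r →
      deriv (fun t' => deriv (fun t'' => u t'' r) t') t
        - deriv (fun r' => deriv (fun r'' => u t r'') r') r
        - (((d : ℝ) - 1) / r) * deriv (fun r'' => u t r'') r
        + ((d : ℝ) - 3) * (Real.sin (2 * r * u t r) - 2 * r * u t r) / (2 * r ^ 3) = 0 := by
  intro t r ht hr
  have hd4 : (0 : ℝ) < d - 4 := by
    have : (5 : ℝ) ≤ d := by exact_mod_cast hd
    linarith
  obtain rfl : u = fun t r => corotationalProfile (√((d : ℝ) - 4)) t r :=
    funext fun t => funext fun r => hu t r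
  exact corotationalProfile_solves_wave (sqrt_pos.mpr hd4).ne' ht.ne' hr.ne' (sq_sqrt hd4.le)
end

section
/- For d ≥ 5, with w*(t,x) = (2t/|x|)·arctan(|x|/(√(d−4) t)) and F(t,x,z) = (d−3)·(sin(2(|x|/t)z) − 2(|x|/t)z)/(2(|x|/t)³), the z-derivative of F evaluated at z = w*(t,x) equals V(t,x) := −8(d−3)(d−4)t⁴/((d−4)t² + |x|²)². -/
open Real

/-- For `d ≥ 5`, with `w*(t,x) = (2t/|x|)·arctan(|x|/(√(d−4)t))` and
`F(t,x,z) = (d−3)(sin(2(|x|/t)z) − 2(|x|/t)z)/(2(|x|/t)³)`, the `z`-derivative of `F`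
at `z = w*(t,x)` equals `V(t,x) = −8(d−3)(d−4)t⁴/((d−4)t² + |x|²)²`. -/
theorem deriv_F_at_wstar (d : ℕ) (hd : 5 ≤ d) (t : ℝ) (ht : 0 < t)
    (x : EuclideanSpace ℝ (Fin d)) (hx : x ≠ 0) :
    deriv
      (fun z : ℝ =>
        ((d : ℝ) - 3) * (Real.sin (2 * (‖x‖ / t) * z) - 2 * (‖x‖ / t) * z) /
          (2 * (‖x‖ / t) ^ 3))
      ((2 * t / ‖x‖) * Real.arctan (‖x‖ / (Real.sqrt ((d : ℝ) - 4) * t)))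
      = -8 * ((d : ℝ) - 3) * ((d : ℝ) - 4) * t ^ 4 /
          (((d : ℝ) - 4) * t ^ 2 + ‖x‖ ^ 2) ^ 2 := by
  have hxn : (0:ℝ) < ‖x‖ := norm_pos_iff.mpr hx
  have hd4 : (1:ℝ) ≤ (d:ℝ) - 4 := by
    have : (5:ℝ) ≤ (d:ℝ) := by exact_mod_cast hd
    linarith
  have hd4p : (0:ℝ) < (d:ℝ) - 4 := by linarith
  set a : ℝ := ‖x‖ / t with ha
  have hap : 0 < a := div_pos hxn ht
  set s : ℝ := ‖x‖ / (Real.sqrt ((d:ℝ)-4) * t) with hsdef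
  set z0 : ℝ := (2 * t / ‖x‖) * Real.arctan s with hz0
  have hD : HasDerivAt (fun z : ℝ =>
      ((d:ℝ)-3) * (Real.sin (2*a*z) - 2*a*z) / (2*a^3))
      (((d:ℝ)-3) * (Real.cos (2*a*z0) * (2*a) - 2*a) / (2*a^3)) z0 := by
    have h1 : HasDerivAt (fun z : ℝ => 2*a*z) (2*a) z0 := by
      simpa using (hasDerivAt_id z0).const_mul (2*a)
    have h2 : HasDerivAt (fun z : ℝ => Real.sin (2*a*z)) (Real.cos (2*a*z0) * (2*a)) z0 :=
      (Real.hasDerivAt_sin (2*a*z0)).comp z0 h1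
    exact ((h2.sub h1).const_mul ((d:ℝ)-3)).div_const _
  rw [hD.deriv]
  have haz : 2*a*z0 = 2*(2*Real.arctan s) := by
    rw [hz0, ha]; field_simp
  have h1s : (0:ℝ) < 1 + s^2 := by positivity
  have c2 : Real.cos (2*Real.arctan s) = (1 - s^2)/(1+s^2) := by
    rw [Real.cos_two_mul, Real.cos_arctan]
    rw [div_pow, one_pow, Real.sq_sqrt h1s.le]
    field_simp
    ring
  have c4 : Real.cos (2*a*z0) = 2*((1 - s^2)/(1+s^2))^2 - 1 := by
    rw [haz, Real.cos_two_mul, c2]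
  have hs2 : s^2 = ‖x‖^2 / (((d:ℝ)-4) * t^2) := by
    rw [hsdef, div_pow, mul_pow, Real.sq_sqrt hd4p.le]
  have hden : (0:ℝ) < ((d:ℝ)-4) * t^2 + ‖x‖^2 := by positivity
  rw [c4, hs2, ha]
  field_simp
  ring
end

section
/- For d ≥ 5 and λ = 4−d, the function f₁(r) = 1/(d−4+r²) solves the ODE (r²−1)f'' + ((2(λ+d−1)r² + 1−d)/r)·f' + ((λ+d−1)(λ+d−2) + V(r))·f = 0 on (0,1), where V(r) = −8(d−3)(d−4)/(d−4+r²)². -/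
section OneDivConstAddSq

variable {c : ℝ}

theorem hasDerivAt_one_div_const_add_sq {x : ℝ} (hx : c + x ^ 2 ≠ 0) :
    HasDerivAt (fun y : ℝ => 1 / (c + y ^ 2)) (-(2 * x) / (c + x ^ 2) ^ 2) x := by
  have h : HasDerivAt (fun y : ℝ => c + y ^ 2) (2 * x) x := by
    simpa using (hasDerivAt_pow 2 x).const_add c
  simpa [one_div] using h.fun_inv hx

theorem deriv_one_div_const_add_sq (hc : 0 < c) :
    deriv (fun y : ℝ => 1 / (c + y ^ 2)) = fun y => -(2 * y) / (c + y ^ 2) ^ 2 :=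
  funext fun x => (hasDerivAt_one_div_const_add_sq (by positivity)).deriv

theorem deriv_deriv_one_div_const_add_sq (hc : 0 < c) (x : ℝ) :
    deriv (deriv fun y : ℝ => 1 / (c + y ^ 2)) x = (6 * x ^ 2 - 2 * c) / (c + x ^ 2) ^ 3 := by
  have hx : c + x ^ 2 ≠ 0 := by positivity
  have hnum : HasDerivAt (fun y : ℝ => -(2 * y)) (-2) x := by
    simpa using ((hasDerivAt_id' x).const_mul (2 : ℝ)).fun_neg
  have hden := ((hasDerivAt_pow 2 x).const_add c).fun_pow 2
  rw [deriv_one_div_const_add_sq hc, (hnum.fun_div hden (pow_ne_zero 2 hx)).deriv]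
  field_simp
  ring

end OneDivConstAddSq

/-- For `d ≥ 5` and `λ = 4−d`, the function `f₁(r) = 1/(d−4+r²)` solves
`(r²−1)f'' + ((2(λ+d−1)r² + 1−d)/r)f' + ((λ+d−1)(λ+d−2) + V(r))f = 0` on `(0,1)`,
where `V(r) = −8(d−3)(d−4)/(d−4+r²)²`. -/
theorem f1_solves_ode (d : ℕ) (hd : 5 ≤ d)
    (f₁ : ℝ → ℝ) (hf₁ : ∀ r : ℝ, f₁ r = 1 / ((d : ℝ) - 4 + r ^ 2))
    (V : ℝ → ℝ)
    (hV : ∀ r : ℝ, V r = -8 * ((d : ℝ) - 3) * ((d : ℝ) - 4) / ((d : ℝ) - 4 + r ^ 2) ^ 2) :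
    ∀ r ∈ Set.Ioo (0 : ℝ) 1,
      (r ^ 2 - 1) * deriv (deriv f₁) r
        + ((2 * (((4 : ℝ) - d) + d - 1) * r ^ 2 + 1 - d) / r) * deriv f₁ r
        + ((((4 : ℝ) - d) + d - 1) * (((4 : ℝ) - d) + d - 2) + V r) * f₁ r = 0 := by
  intro r hr
  have hc : (0 : ℝ) < d - 4 := by
    have : (5 : ℝ) ≤ d := by exact_mod_cast hd
    linarith
  have hr0 : r ≠ 0 := hr.1.ne'
  have hD : (d : ℝ) - 4 + r ^ 2 ≠ 0 := by positivity
  obtain rfl : f₁ = fun y => 1 / ((d : ℝ) - 4 + y ^ 2) := funext hf₁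
  rw [deriv_deriv_one_div_const_add_sq hc, deriv_one_div_const_add_sq hc, hV]
  field_simp
  ring
end

section
/- For d ≥ 5 and λ = −1, the function f₂(r) = (1−r²)^{(5−d)/2}/(d−4+r²) solves the ODE (r²−1)f'' + ((2(λ+d−1)r² + 1−d)/r)·f' + ((λ+d−1)(λ+d−2) + V(r))·f = 0 on (0,1), where V(r) = −8(d−3)(d−4)/(d−4+r²)². -/
open Real Filter Topology

/-!
With `p = (5 - d)/2` and `k = d - 4` we have `f₂ = (1 - r²)^p / (k + r²)`. Each derivative lowers
the exponent of `1 - r²` by one and raises the power of `k + r²` by one, so after factoring out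
`(1 - r²)^(p-2) / (k + r²)^3` the left-hand side of the ODE is a polynomial in `r` and `d`,
which vanishes identically.
-/

theorem rpow_eq_rpow_sub_one_mul {a : ℝ} (ha : a ≠ 0) (q : ℝ) : a ^ q = a ^ (q - 1) * a := by
  rw [← rpow_add_one ha, sub_add_cancel]

section OneSubSqRpowDiv

variable {p k x : ℝ}

theorem hasDerivAt_one_sub_sq_rpow (hx : 1 - x ^ 2 ≠ 0) :
    HasDerivAt (fun y => (1 - y ^ 2) ^ p) (-2 * p * x * (1 - x ^ 2) ^ (p - 1)) x := by
  convert ((hasDerivAt_pow 2 x).const_sub 1).rpow_const (p := p) (Or.inl hx) using 1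
  push_cast
  ring

theorem hasDerivAt_one_sub_sq_rpow_div (hx : 1 - x ^ 2 ≠ 0) (hk : k + x ^ 2 ≠ 0) :
    HasDerivAt (fun y => (1 - y ^ 2) ^ p / (k + y ^ 2))
      ((1 - x ^ 2) ^ (p - 1) * (x * ((2 - 2 * p) * x ^ 2 - 2 * p * k - 2)) / (k + x ^ 2) ^ 2) x := by
  refine ((hasDerivAt_one_sub_sq_rpow hx).div
    ((hasDerivAt_pow 2 x).const_add k) hk).congr_deriv ?_
  rw [rpow_eq_rpow_sub_one_mul hx p]
  push_cast
  ring

theorem deriv_one_sub_sq_rpow_div_eventuallyEq (hx : 1 - x ^ 2 ≠ 0) (hk : k + x ^ 2 ≠ 0) :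
    deriv (fun y => (1 - y ^ 2) ^ p / (k + y ^ 2)) =ᶠ[𝓝 x]
      fun y => (1 - y ^ 2) ^ (p - 1) * (y * ((2 - 2 * p) * y ^ 2 - 2 * p * k - 2)) / (k + y ^ 2) ^ 2 := by
  have hx' := (show Continuous fun y : ℝ => 1 - y ^ 2 by fun_prop).continuousAt.eventually_ne hx
  have hk' := (show Continuous fun y : ℝ => k + y ^ 2 by fun_prop).continuousAt.eventually_ne hk
  filter_upwards [hx', hk'] with y hy hky
  exact (hasDerivAt_one_sub_sq_rpow_div hy hky).deriv

theorem hasDerivAt_deriv_one_sub_sq_rpow_div (hx : 1 - x ^ 2 ≠ 0) (hk : k + x ^ 2 ≠ 0) :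
    HasDerivAt (deriv fun y => (1 - y ^ 2) ^ p / (k + y ^ 2))
      ((1 - x ^ 2) ^ (p - 2) *
        ((-2 * (p - 1) * x * (x * ((2 - 2 * p) * x ^ 2 - 2 * p * k - 2))
          + (1 - x ^ 2) * (3 * (2 - 2 * p) * x ^ 2 - 2 * p * k - 2)) * (k + x ^ 2)
          - 4 * x * (1 - x ^ 2) * (x * ((2 - 2 * p) * x ^ 2 - 2 * p * k - 2))) / (k + x ^ 2) ^ 3) x := by
  have hnum : HasDerivAt (fun y => y * ((2 - 2 * p) * y ^ 2 - 2 * p * k - 2))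
      (3 * (2 - 2 * p) * x ^ 2 - 2 * p * k - 2) x := by
    refine ((hasDerivAt_id x).mul ((((hasDerivAt_pow 2 x).const_mul (2 - 2 * p)).sub_const
      (2 * p * k)).sub_const 2)).congr_deriv ?_
    simp only [id]
    push_cast
    ring
  have h := ((hasDerivAt_one_sub_sq_rpow (p := p - 1) hx).mul hnum).div
    (((hasDerivAt_pow 2 x).const_add k).pow 2) (pow_ne_zero 2 hk)
  refine (h.congr_of_eventuallyEq (deriv_one_sub_sq_rpow_div_eventuallyEq hx hk)).congr_deriv ?_
  simp only [Pi.mul_apply, Pi.pow_apply]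
  rw [rpow_eq_rpow_sub_one_mul hx (p - 1), show p - 1 - 1 = p - 2 by ring]
  field_simp
  push_cast
  ring

end OneSubSqRpowDiv

theorem one_sub_sq_rpow_div_solves_ode {c r : ℝ} (hr : r ≠ 0) (hx : 1 - r ^ 2 ≠ 0)
    (hk : c - 4 + r ^ 2 ≠ 0) :
    (r ^ 2 - 1) * deriv (deriv fun y => (1 - y ^ 2) ^ ((5 - c) / 2) / (c - 4 + y ^ 2)) r
      + ((2 * (c - 2) * r ^ 2 + 1 - c) / r)
        * deriv (fun y => (1 - y ^ 2) ^ ((5 - c) / 2) / (c - 4 + y ^ 2)) r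
      + ((c - 2) * (c - 3) - 8 * (c - 3) * (c - 4) / (c - 4 + r ^ 2) ^ 2)
        * ((1 - r ^ 2) ^ ((5 - c) / 2) / (c - 4 + r ^ 2)) = 0 := by
  rw [(hasDerivAt_deriv_one_sub_sq_rpow_div hx hk).deriv,
    (hasDerivAt_one_sub_sq_rpow_div hx hk).deriv,
    rpow_eq_rpow_sub_one_mul hx ((5 - c) / 2), rpow_eq_rpow_sub_one_mul hx ((5 - c) / 2 - 1),
    show (5 - c) / 2 - 2 = (5 - c) / 2 - 1 - 1 by ring]
  field_simp
  ring

/-- For `d ≥ 5` and `λ = −1`, the function `f₂(r) = (1−r²)^{(5−d)/2}/(d−4+r²)` solves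
`(r²−1)f'' + ((2(λ+d−1)r² + 1−d)/r)f' + ((λ+d−1)(λ+d−2) + V(r))f = 0` on `(0,1)`,
where `V(r) = −8(d−3)(d−4)/(d−4+r²)²`. -/
theorem f2_solves_ode (d : ℕ) (hd : 5 ≤ d)
    (f₂ : ℝ → ℝ)
    (hf₂ : ∀ r : ℝ, f₂ r =
      (1 - r ^ 2) ^ (((5 : ℝ) - d) / 2) / ((d : ℝ) - 4 + r ^ 2))
    (V : ℝ → ℝ)
    (hV : ∀ r : ℝ, V r = -8 * ((d : ℝ) - 3) * ((d : ℝ) - 4) / ((d : ℝ) - 4 + r ^ 2) ^ 2) :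
    ∀ r ∈ Set.Ioo (0 : ℝ) 1,
      (r ^ 2 - 1) * deriv (deriv f₂) r
        + ((2 * ((-1 : ℝ) + d - 1) * r ^ 2 + 1 - d) / r) * deriv f₂ r
        + (((-1 : ℝ) + d - 1) * ((-1 : ℝ) + d - 2) + V r) * f₂ r = 0 := by
  rintro r ⟨hr0, hr1⟩
  obtain rfl : f₂ = _ := funext hf₂
  have hd' : (5 : ℝ) ≤ d := by exact_mod_cast hd
  have h := one_sub_sq_rpow_div_solves_ode (c := d) hr0.ne' (by nlinarith) (by nlinarith)
  rw [hV]
  linear_combination h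
end

section
/- Finite-speed-of-propagation domain structure: for fixed (s₀,y₀) ∈ (0,∞) × B^d, the time-slice of the causal past, D_s := {y ∈ B^d : (e^s/(1−|y|²) − e^{s₀}/(1−|y₀|²))² ≥ |e^s y/(1−|y|²) − e^{s₀}y₀/(1−|y₀|²)|²}, contains the ball of radius R(s) = 1 − e^{s−s₀} centered at P(s)y₀ with P(s) = e^{s−s₀}, for every 0 ≤ s < s₀. -/
open Real Set

/-!
With `A = a / (1 - ‖y‖²)` and `B = b / (1 - ‖y₀‖²)`, the Minkowski interval between the lifts
`(A, A y)` and `(B, B y₀)` satisfies the identity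
`a b ((A - B)² - ‖A y - B y₀‖²) = A B ((b - a)² - ‖b y - a y₀‖²)`,
so the lifted points are causally related exactly when `‖b y - a y₀‖ ≤ |b - a|`.
For `a = e^s`, `b = e^{s₀}` this is the ball of radius `1 - e^{s - s₀}` about `e^{s - s₀} y₀`.
-/

section InnerProductSpace

variable {E : Type*} [NormedAddCommGroup E] [InnerProductSpace ℝ E]

theorem norm_lt_one_of_norm_sub_smul_lt {y y₀ : E} {l : ℝ} (hl : 0 ≤ l) (hy₀ : ‖y₀‖ ≤ 1)
    (h : ‖y - l • y₀‖ < 1 - l) : ‖y‖ < 1 :=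
  calc ‖y‖ = ‖(y - l • y₀) + l • y₀‖ := by rw [sub_add_cancel]
    _ ≤ ‖y - l • y₀‖ + l * ‖y₀‖ := by rw [← norm_smul_of_nonneg hl]; exact norm_add_le _ _
    _ < 1 - l + l * 1 := add_lt_add_of_lt_of_le h (mul_le_mul_of_nonneg_left hy₀ hl)
    _ = 1 := by ring

theorem norm_smul_sub_smul_sq (c d : ℝ) (u v : E) :
    ‖c • u - d • v‖ ^ 2 = c ^ 2 * ‖u‖ ^ 2 - 2 * (c * d * inner ℝ u v) + d ^ 2 * ‖v‖ ^ 2 := by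
  rw [norm_sub_sq_real, real_inner_smul_left, real_inner_smul_right, norm_smul, norm_smul,
    mul_pow, mul_pow, Real.norm_eq_abs, Real.norm_eq_abs, sq_abs, sq_abs]
  ring

theorem mul_minkowski_interval_eq {a b A B : ℝ} {y y₀ : E} (hA : A * (1 - ‖y‖ ^ 2) = a)
    (hB : B * (1 - ‖y₀‖ ^ 2) = b) :
    a * b * ((A - B) ^ 2 - ‖A • y - B • y₀‖ ^ 2)
      = A * B * ((b - a) ^ 2 - ‖b • y - a • y₀‖ ^ 2) := by
  rw [norm_smul_sub_smul_sq, norm_smul_sub_smul_sq, ← hA, ← hB]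
  ring

theorem norm_lift_sub_lift_sq_le {a b : ℝ} (ha : 0 < a) (hb : 0 < b) {y y₀ : E}
    (hy : ‖y‖ < 1) (hy₀ : ‖y₀‖ < 1) (h : ‖b • y - a • y₀‖ < b - a) :
    ‖(a / (1 - ‖y‖ ^ 2)) • y - (b / (1 - ‖y₀‖ ^ 2)) • y₀‖ ^ 2
      ≤ (a / (1 - ‖y‖ ^ 2) - b / (1 - ‖y₀‖ ^ 2)) ^ 2 := by
  have hN : 0 < 1 - ‖y‖ ^ 2 := by nlinarith [norm_nonneg y]
  have hN₀ : 0 < 1 - ‖y₀‖ ^ 2 := by nlinarith [norm_nonneg y₀]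
  have hAB : 0 < a / (1 - ‖y‖ ^ 2) * (b / (1 - ‖y₀‖ ^ 2)) := by positivity
  have hgap : 0 < (b - a) ^ 2 - ‖b • y - a • y₀‖ ^ 2 :=
    sub_pos.mpr (pow_lt_pow_left₀ h (norm_nonneg _) two_ne_zero)
  have key := mul_minkowski_interval_eq (y := y) (y₀ := y₀) (div_mul_cancel₀ a hN.ne')
    (div_mul_cancel₀ b hN₀.ne')
  have : 0 < a * b * ((a / (1 - ‖y‖ ^ 2) - b / (1 - ‖y₀‖ ^ 2)) ^ 2
      - ‖(a / (1 - ‖y‖ ^ 2)) • y - (b / (1 - ‖y₀‖ ^ 2)) • y₀‖ ^ 2) := by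
    rw [key]; exact mul_pos hAB hgap
  exact (sub_pos.mp ((mul_pos_iff_of_pos_left (mul_pos ha hb)).mp this)).le

end InnerProductSpace

theorem causal_past_contains_ball_general (d : ℕ)
    (s₀ : ℝ) (y₀ : EuclideanSpace ℝ (Fin d)) (hy₀ : ‖y₀‖ < 1) :
    ∀ s : ℝ, 0 ≤ s → s < s₀ →
      ∀ y : EuclideanSpace ℝ (Fin d),
        ‖y - Real.exp (s - s₀) • y₀‖ < 1 - Real.exp (s - s₀) →
        ‖y‖ < 1 ∧
        (Real.exp s / (1 - ‖y‖ ^ 2) - Real.exp s₀ / (1 - ‖y₀‖ ^ 2)) ^ 2 ≥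
          ‖(Real.exp s / (1 - ‖y‖ ^ 2)) • y -
            (Real.exp s₀ / (1 - ‖y₀‖ ^ 2)) • y₀‖ ^ 2 := by
  intro s _ _ y hy
  set l := Real.exp (s - s₀)
  have hexp : Real.exp s = Real.exp s₀ * l := by rw [← Real.exp_add, add_sub_cancel]
  have hy_norm : ‖y‖ < 1 := norm_lt_one_of_norm_sub_smul_lt (Real.exp_pos _).le hy₀.le hy
  refine ⟨hy_norm, norm_lift_sub_lift_sq_le (Real.exp_pos s) (Real.exp_pos s₀) hy_norm hy₀ ?_⟩
  calc ‖Real.exp s₀ • y - Real.exp s • y₀‖ = Real.exp s₀ * ‖y - l • y₀‖ := by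
        rw [hexp, mul_smul, ← smul_sub, norm_smul, Real.norm_of_nonneg (Real.exp_pos _).le]
    _ < Real.exp s₀ * (1 - l) := mul_lt_mul_of_pos_left hy (Real.exp_pos _)
    _ = Real.exp s₀ - Real.exp s := by rw [hexp]; ring

/-- Finite-speed-of-propagation domain structure: for fixed
`(s₀,y₀) ∈ (0,∞) × B^d`, the time-slice of the causal past,
`D_s = {y ∈ B^d : (e^s/(1−|y|²) − e^{s₀}/(1−|y₀|²))² ≥ |e^s y/(1−|y|²) − e^{s₀}y₀/(1−|y₀|²)|²}`,
contains the ball of radius `R(s) = 1 − e^{s−s₀}` centered at `P(s)y₀` with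
`P(s) = e^{s−s₀}`, for every `0 ≤ s < s₀`. -/
theorem causal_past_contains_ball (d : ℕ) (hd : 1 ≤ d)
    (s₀ : ℝ) (hs₀ : 0 < s₀) (y₀ : EuclideanSpace ℝ (Fin d)) (hy₀ : ‖y₀‖ < 1) :
    ∀ s : ℝ, 0 ≤ s → s < s₀ →
      ∀ y : EuclideanSpace ℝ (Fin d),
        ‖y - Real.exp (s - s₀) • y₀‖ < 1 - Real.exp (s - s₀) →
        ‖y‖ < 1 ∧
        (Real.exp s / (1 - ‖y‖ ^ 2) - Real.exp s₀ / (1 - ‖y₀‖ ^ 2)) ^ 2 ≥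
          ‖(Real.exp s / (1 - ‖y‖ ^ 2)) • y -
            (Real.exp s₀ / (1 - ‖y₀‖ ^ 2)) • y₀‖ ^ 2 :=
  causal_past_contains_ball_general d s₀ y₀ hy₀
end
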